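/- The reduced Hamiltonian H(r₁,r₂,θ) = -(1/2)[Ω₀ln(1-r₁²) + Ω₀ln(1-r₂²) + (Φ/2)ln(r₁² + r₂² - 2r₁r₂cos θ)] has a critical point at (r₀, r₀, π) with r₀ = √(Φ/(4Ω₀+Φ)), and its Hessian matrix there is (1/8)·[[7Φ+12Ω₀+Φ²/Ω₀, Φ+4Ω₀, 0],[Φ+4Ω₀, 7Φ+12Ω₀+Φ²/Ω₀, 0],[0,0,Φ]]. -/

import Mathlib

/-!
Along the ray `θ = π` the interaction term is `log ((r₁ + r₂)²) = 2 log (r₁ + r₂)`, so `H` splits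
into one-variable functions of `r₁`, `r₂` and `r₁ + r₂`, and the radial critical-point equation
`Ω₀ r / (1 - r²) = Φ / (4 r)` becomes `r² (4 Ω₀ + Φ) = Φ`. In the angle, `H` is symmetric about `π`
(`cos (2π - θ) = cos θ`), which kills the mixed radial-angular entries; on the diagonal
`r₁ = r₂` the angular partial is `-(Φ/4) sin θ / (1 - cos θ)`, whose derivative at `π` is `Φ/8`.
-/

noncomputable def Hred (Ω₀ Φ r₁ r₂ θ : ℝ) : ℝ :=
  -(1 / 2) * (Ω₀ * Real.log (1 - r₁ ^ 2) + Ω₀ * Real.log (1 - r₂ ^ 2)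
    + (Φ / 2) * Real.log (r₁ ^ 2 + r₂ ^ 2 - 2 * r₁ * r₂ * Real.cos θ))

open Real Filter Topology

lemma deriv_eq_zero_of_reflection {F : Type*} [NormedAddCommGroup F] [NormedSpace ℝ F]
    {f : ℝ → F} {a : ℝ} (h : ∀ x, f (2 * a - x) = f x) : deriv f a = 0 := by
  have : IsAddTorsionFree F := .of_isTorsionFree ℝ F
  have h' := deriv_comp_const_sub f (2 * a) a
  simp only [h] at h'
  rwa [show 2 * a - a = a by ring, self_eq_neg] at h'

lemma hasDerivAt_log_one_sub_sq {x : ℝ} (hx : 1 - x ^ 2 ≠ 0) :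
    HasDerivAt (fun x => log (1 - x ^ 2)) (-(2 * x) / (1 - x ^ 2)) x :=
  (((hasDerivAt_pow 2 x).const_sub 1).log hx).congr_deriv (by push_cast; ring)

lemma hasDerivAt_div_one_sub_sq {x : ℝ} (hx : 1 - x ^ 2 ≠ 0) :
    HasDerivAt (fun x => x / (1 - x ^ 2)) ((1 + x ^ 2) / (1 - x ^ 2) ^ 2) x :=
  ((hasDerivAt_id' x).div ((hasDerivAt_pow 2 x).const_sub 1) hx).congr_deriv (by push_cast; ring)

lemma hasDerivAt_one_div_add_const {x y : ℝ} (hxy : x + y ≠ 0) :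
    HasDerivAt (fun x => 1 / (x + y)) (-1 / (x + y) ^ 2) x :=
  ((hasDerivAt_const x 1).div ((hasDerivAt_id' x).add_const y) hxy).congr_deriv (by ring)

lemma Hred_comm (Ω₀ Φ r₁ r₂ θ : ℝ) : Hred Ω₀ Φ r₁ r₂ θ = Hred Ω₀ Φ r₂ r₁ θ := by
  unfold Hred; ring_nf

lemma Hred_pi (Ω₀ Φ r₁ r₂ : ℝ) :
    Hred Ω₀ Φ r₁ r₂ π = -(Ω₀ / 2) * log (1 - r₁ ^ 2) - Ω₀ / 2 * log (1 - r₂ ^ 2)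
      - Φ / 2 * log (r₁ + r₂) := by
  have hD : r₁ ^ 2 + r₂ ^ 2 - 2 * r₁ * r₂ * cos π = (r₁ + r₂) ^ 2 := by rw [cos_pi]; ring
  rw [Hred, hD, log_pow]
  push_cast; ring

lemma hasDerivAt_Hred_pi_fst {Ω₀ Φ x y : ℝ} (hx : 1 - x ^ 2 ≠ 0) (hxy : x + y ≠ 0) :
    HasDerivAt (fun x => Hred Ω₀ Φ x y π) (Ω₀ * x / (1 - x ^ 2) - Φ / 2 / (x + y)) x := by
  simp only [Hred_pi]
  refine (((hasDerivAt_log_one_sub_sq hx).const_mul (-(Ω₀ / 2))).sub_const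
    (Ω₀ / 2 * log (1 - y ^ 2)) |>.sub (((hasDerivAt_id' x).add_const y).log hxy
    |>.const_mul (Φ / 2))).congr_deriv ?_
  ring

lemma hasDerivAt_deriv_Hred_pi_fst {Ω₀ Φ x y : ℝ} (hx : 1 - x ^ 2 ≠ 0) (hxy : x + y ≠ 0) :
    HasDerivAt (fun x => deriv (fun x' => Hred Ω₀ Φ x' y π) x)
      (Ω₀ * (1 + x ^ 2) / (1 - x ^ 2) ^ 2 + Φ / 2 / (x + y) ^ 2) x := by
  have hnear : ∀ᶠ x' in 𝓝 x, 1 - x' ^ 2 ≠ 0 ∧ x' + y ≠ 0 :=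
    (ContinuousAt.eventually_ne (g := fun x => 1 - x ^ 2) (by fun_prop) hx).and
      (ContinuousAt.eventually_ne (g := fun x => x + y) (by fun_prop) hxy)
  have hderiv : (fun x => deriv (fun x' => Hred Ω₀ Φ x' y π) x) =ᶠ[𝓝 x]
      fun x => Ω₀ * (x / (1 - x ^ 2)) - Φ / 2 * (1 / (x + y)) := by
    filter_upwards [hnear] with x' ⟨hx', hxy'⟩
    rw [(hasDerivAt_Hred_pi_fst hx' hxy').deriv]
    ring
  refine (((hasDerivAt_div_one_sub_sq hx).const_mul Ω₀).sub
    ((hasDerivAt_one_div_add_const hxy).const_mul (Φ / 2)) |>.congr_deriv ?_).congr_of_eventuallyEq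
    hderiv
  ring

lemma hasDerivAt_deriv_Hred_pi_snd {Ω₀ Φ x y : ℝ} (hy : 1 - y ^ 2 ≠ 0) (hxy : x + y ≠ 0) :
    HasDerivAt (fun x => deriv (fun y => Hred Ω₀ Φ x y π) y) (Φ / 2 / (x + y) ^ 2) x := by
  have hderiv : (fun x => deriv (fun y => Hred Ω₀ Φ x y π) y) =ᶠ[𝓝 x]
      fun x => Ω₀ * y / (1 - y ^ 2) - Φ / 2 * (1 / (x + y)) := by
    filter_upwards [ContinuousAt.eventually_ne (g := fun x => x + y) (by fun_prop) hxy] with x' hxy'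
    rw [show (fun y => Hred Ω₀ Φ x' y π) = fun y => Hred Ω₀ Φ y x' π from
      funext fun y => Hred_comm Ω₀ Φ x' y π,
      (hasDerivAt_Hred_pi_fst hy (by rwa [add_comm])).deriv, add_comm y]
    ring
  refine (((hasDerivAt_one_div_add_const hxy).const_mul (Φ / 2)).const_sub _
    |>.congr_deriv ?_).congr_of_eventuallyEq hderiv
  ring

lemma hasDerivAt_Hred_angle {Ω₀ Φ r₁ r₂ θ : ℝ}
    (hD : r₁ ^ 2 + r₂ ^ 2 - 2 * r₁ * r₂ * cos θ ≠ 0) :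
    HasDerivAt (fun θ => Hred Ω₀ Φ r₁ r₂ θ)
      (-(Φ / 2) * (r₁ * r₂ * sin θ) / (r₁ ^ 2 + r₂ ^ 2 - 2 * r₁ * r₂ * cos θ)) θ :=
  ((((hasDerivAt_cos θ).const_mul (2 * r₁ * r₂)).const_sub (r₁ ^ 2 + r₂ ^ 2)).log hD
    |>.const_mul (Φ / 2) |>.const_add (Ω₀ * log (1 - r₁ ^ 2) + Ω₀ * log (1 - r₂ ^ 2))
    |>.const_mul (-(1 / 2))).congr_deriv (by ring)

lemma hasDerivAt_Hred_angle_pi {Ω₀ Φ r₁ r₂ : ℝ} (h : r₁ + r₂ ≠ 0) :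
    HasDerivAt (fun θ => Hred Ω₀ Φ r₁ r₂ θ) 0 π := by
  have hD : r₁ ^ 2 + r₂ ^ 2 - 2 * r₁ * r₂ * cos π ≠ 0 := by
    rw [cos_pi]; convert pow_ne_zero 2 h using 1; ring
  simpa [sin_pi] using hasDerivAt_Hred_angle (Ω₀ := Ω₀) (Φ := Φ) hD

lemma deriv_Hred_angle_pi (Ω₀ Φ r₁ r₂ : ℝ) : deriv (fun θ => Hred Ω₀ Φ r₁ r₂ θ) π = 0 :=
  deriv_eq_zero_of_reflection fun θ => by simp only [Hred, cos_two_pi_sub]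

lemma hasDerivAt_deriv_Hred_angle_diag {Ω₀ Φ r : ℝ} (hr : r ≠ 0) :
    HasDerivAt (fun θ => deriv (fun θ' => Hred Ω₀ Φ r r θ') θ) (Φ / 8) π := by
  have hderiv : (fun θ => deriv (fun θ' => Hred Ω₀ Φ r r θ') θ) =ᶠ[𝓝 π]
      fun θ => -(Φ / 4) * (sin θ / (1 - cos θ)) := by
    filter_upwards [ContinuousAt.eventually_ne (g := fun θ => 1 - cos θ) (by fun_prop)
      (show 1 - cos π ≠ 0 by rw [cos_pi]; norm_num)] with θ hθ
    have hD : r ^ 2 + r ^ 2 - 2 * r * r * cos θ = 2 * r ^ 2 * (1 - cos θ) := by ring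
    rw [(hasDerivAt_Hred_angle (by rw [hD]; exact mul_ne_zero (by positivity) hθ)).deriv, hD]
    field_simp
    ring
  have hq := (hasDerivAt_sin π).div ((hasDerivAt_cos π).const_sub 1) (by rw [cos_pi]; norm_num)
  refine ((hq.const_mul (-(Φ / 4))).congr_deriv ?_).congr_of_eventuallyEq hderiv
  simp only [sin_pi, cos_pi]
  ring

theorem Hred_critical_point_and_hessian
    (Ω₀ Φ : ℝ) (hΩ₀ : 0 < Ω₀) (hΦ : 0 < Φ)
    (r₀ : ℝ) (hr₀ : r₀ = Real.sqrt (Φ / (4 * Ω₀ + Φ))) :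
    -- critical point: the three partial derivatives vanish
    HasDerivAt (fun x => Hred Ω₀ Φ x r₀ Real.pi) 0 r₀ ∧
    HasDerivAt (fun y => Hred Ω₀ Φ r₀ y Real.pi) 0 r₀ ∧
    HasDerivAt (fun θ => Hred Ω₀ Φ r₀ r₀ θ) 0 Real.pi ∧
    -- Hessian entries
    deriv (fun x => deriv (fun x' => Hred Ω₀ Φ x' r₀ Real.pi) x) r₀
      = (7 * Φ + 12 * Ω₀ + Φ ^ 2 / Ω₀) / 8 ∧
    deriv (fun y => deriv (fun y' => Hred Ω₀ Φ r₀ y' Real.pi) y) r₀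
      = (7 * Φ + 12 * Ω₀ + Φ ^ 2 / Ω₀) / 8 ∧
    deriv (fun x => deriv (fun y => Hred Ω₀ Φ x y Real.pi) r₀) r₀
      = (Φ + 4 * Ω₀) / 8 ∧
    deriv (fun x => deriv (fun θ => Hred Ω₀ Φ x r₀ θ) Real.pi) r₀ = 0 ∧
    deriv (fun y => deriv (fun θ => Hred Ω₀ Φ r₀ y θ) Real.pi) r₀ = 0 ∧
    deriv (fun θ => deriv (fun θ' => Hred Ω₀ Φ r₀ r₀ θ') θ) Real.pi = Φ / 8 := by
  have hr_sq : r₀ ^ 2 = Φ / (4 * Ω₀ + Φ) := by rw [hr₀, sq_sqrt (by positivity)]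
  have hr_pos : 0 < r₀ := hr₀ ▸ sqrt_pos.2 (by positivity)
  have h1 : 1 - r₀ ^ 2 ≠ 0 := by
    rw [hr_sq, one_sub_div (by positivity), add_sub_cancel_right]; positivity
  have h2 : r₀ + r₀ ≠ 0 := by positivity
  have hswap : (fun y => Hred Ω₀ Φ r₀ y π) = fun y => Hred Ω₀ Φ y r₀ π :=
    funext fun y => Hred_comm Ω₀ Φ r₀ y π
  have hcrit : HasDerivAt (fun x => Hred Ω₀ Φ x r₀ π) 0 r₀ := by
    refine (hasDerivAt_Hred_pi_fst h1 h2).congr_deriv ?_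
    rw [sub_eq_zero, div_div, div_eq_div_iff h1 (by positivity)]
    have hr_sq' : r₀ ^ 2 * (4 * Ω₀ + Φ) = Φ := by rw [hr_sq]; field_simp
    linear_combination hr_sq'
  have hxx : deriv (fun x => deriv (fun x' => Hred Ω₀ Φ x' r₀ π) x) r₀
      = (7 * Φ + 12 * Ω₀ + Φ ^ 2 / Ω₀) / 8 := by
    rw [(hasDerivAt_deriv_Hred_pi_fst h1 h2).deriv, ← two_mul, mul_pow, hr_sq]
    field_simp
    ring
  refine ⟨hcrit, hswap ▸ hcrit, hasDerivAt_Hred_angle_pi h2, hxx, hswap ▸ hxx, ?_, ?_, ?_,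
    (hasDerivAt_deriv_Hred_angle_diag hr_pos.ne').deriv⟩
  · rw [(hasDerivAt_deriv_Hred_pi_snd h1 h2).deriv, ← two_mul, mul_pow, hr_sq]
    field_simp
    ring
  all_goals simp only [deriv_Hred_angle_pi, deriv_const]
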